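/- Let X ∈ B(L²(𝕋)). Then X is a transposed paired operator, i.e. X = P₊ M_φ + P₋ M_ψ for some φ, ψ ∈ L∞(𝕋), if and only if X = P₊ M_z* X M_z + P₋ M_z X M_z*. Moreover, in that case the representing functions φ and ψ are unique (as elements of L∞(𝕋)). -/

import Mathlib

open MeasureTheory Complex AddCircle
open scoped InnerProductSpace ENNReal Real

noncomputable section

namespace PaperTH

instance fact2pi : Fact (0 < 2 * Real.pi) := ⟨by positivity⟩

/-- The circle, as `ℝ / 2πℤ`. -/
abbrev 𝕋c := AddCircle (2 * Real.pi)

/-- The normalized Lebesgue (Haar) measure on the circle. -/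
abbrev μc : Measure 𝕋c := haarAddCircle

/-- `L²(𝕋)`. -/
abbrev L2 := Lp ℂ 2 μc

/-- The Hardy space `H²(𝕋)`: members of `L²(𝕋)` all of whose Fourier coefficients of
negative index vanish. -/
def Hardy : Submodule ℂ L2 where
  carrier := {f | ∀ n : ℤ, n < 0 → fourierCoeff (⇑f) n = 0}
  add_mem' := by
    intro f g hf hg n hn
    have hf' := hf n hn
    have hg' := hg n hn
    rw [← fourierBasis_repr] at hf' hg' ⊢
    rw [map_add, lp.coeFn_add, Pi.add_apply, hf', hg', add_zero]
  zero_mem' := by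
    intro n hn
    rw [← fourierBasis_repr, map_zero, lp.coeFn_zero, Pi.zero_apply]
  smul_mem' := by
    intro c f hf n hn
    have hf' := hf n hn
    rw [← fourierBasis_repr] at hf' ⊢
    rw [_root_.map_smul, lp.coeFn_smul, Pi.smul_apply, hf', smul_zero]

theorem isClosed_Hardy : IsClosed (Hardy : Set L2) := by
  have h : (Hardy : Set L2) =
      ⋂ (n : ℤ) (_ : n < 0), ((innerSL ℂ (fourierBasis n)) ⁻¹' {(0 : ℂ)}) := by
    ext f
    simp only [Set.mem_iInter, Set.mem_preimage, Set.mem_singleton_iff, SetLike.mem_coe]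
    constructor
    · intro hf n hn
      have := hf n hn
      rw [← fourierBasis_repr, fourierBasis.repr_apply_apply] at this
      simpa using this
    · intro hf n hn
      have := hf n hn
      rw [← fourierBasis_repr, fourierBasis.repr_apply_apply]
      simpa using this
  rw [h]
  exact isClosed_iInter fun n => isClosed_iInter fun _ =>
    (isClosed_singleton).preimage (innerSL ℂ (fourierBasis n)).continuous

instance : CompleteSpace Hardy := isClosed_Hardy.completeSpace_coe

/-- The Szegő projection `P₊ : L²(𝕋) → L²(𝕋)` onto the Hardy space. -/
def Pplus : L2 →L[ℂ] L2 := Hardy.subtypeL.comp (Submodule.orthogonalProjectionOnto Hardy)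

/-- `P₋ = I - P₊`. -/
def Pminus : L2 →L[ℂ] L2 := ContinuousLinearMap.id ℂ L2 - Pplus

/-- Underlying function of the multiplication operator. -/
def MopFun (φ : 𝕋c → ℂ) (hφ : MemLp φ ∞ μc) (f : L2) : L2 :=
  ((Lp.memLp f).smul hφ).toLp (φ • ⇑f)

theorem MopFun_coeFn (φ : 𝕋c → ℂ) (hφ : MemLp φ ∞ μc) (f : L2) :
    ⇑(MopFun φ hφ f) =ᵐ[μc] φ • ⇑f := MemLp.coeFn_toLp _

theorem MopFun_add (φ : 𝕋c → ℂ) (hφ : MemLp φ ∞ μc) (f g : L2) :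
    MopFun φ hφ (f + g) = MopFun φ hφ f + MopFun φ hφ g := by
  apply Lp.ext
  filter_upwards [MopFun_coeFn φ hφ (f + g), MopFun_coeFn φ hφ f, MopFun_coeFn φ hφ g,
    Lp.coeFn_add f g, Lp.coeFn_add (MopFun φ hφ f) (MopFun φ hφ g)] with x h1 h2 h3 h4 h5
  simp only [h1, h5, Pi.add_apply, h2, h3, Pi.smul_apply, Pi.mul_apply, smul_eq_mul, h4]
  ring

theorem MopFun_smul (φ : 𝕋c → ℂ) (hφ : MemLp φ ∞ μc) (c : ℂ) (f : L2) :
    MopFun φ hφ (c • f) = c • MopFun φ hφ f := by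
  apply Lp.ext
  filter_upwards [MopFun_coeFn φ hφ (c • f), MopFun_coeFn φ hφ f,
    Lp.coeFn_smul c f, Lp.coeFn_smul c (MopFun φ hφ f)] with x h1 h2 h3 h4
  simp only [h1, h4, Pi.smul_apply, Pi.mul_apply, h2, h3, smul_eq_mul]
  ring

theorem MopFun_norm (φ : 𝕋c → ℂ) (hφ : MemLp φ ∞ μc) (f : L2) :
    ‖MopFun φ hφ f‖ ≤ (eLpNorm φ ∞ μc).toReal * ‖f‖ := by
  have hrfl : MopFun φ hφ f = ((Lp.memLp f).smul hφ).toLp (φ • ⇑f) := rfl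
  rw [hrfl, Lp.norm_toLp (φ • ⇑f) ((Lp.memLp f).smul hφ), Lp.norm_def]
  have hb : eLpNorm (φ • ⇑f) 2 μc ≤ eLpNorm φ ∞ μc * eLpNorm (⇑f) 2 μc :=
    eLpNorm_smul_le_eLpNorm_top_mul_eLpNorm 2 (Lp.aestronglyMeasurable f) φ
  have hfin : eLpNorm φ ∞ μc * eLpNorm (⇑f) 2 μc ≠ ∞ :=
    ENNReal.mul_ne_top hφ.eLpNorm_ne_top (Lp.eLpNorm_ne_top f)
  calc (eLpNorm (φ • ⇑f) 2 μc).toReal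
      ≤ (eLpNorm φ ∞ μc * eLpNorm (⇑f) 2 μc).toReal := ENNReal.toReal_mono hfin hb
    _ = (eLpNorm φ ∞ μc).toReal * (eLpNorm (⇑f) 2 μc).toReal := ENNReal.toReal_mul

/-- The multiplication (Laurent) operator `M_φ` on `L²(𝕋)` with symbol `φ ∈ L∞(𝕋)`. -/
def Mop (φ : 𝕋c → ℂ) (hφ : MemLp φ ∞ μc) : L2 →L[ℂ] L2 :=
  LinearMap.mkContinuous
    { toFun := MopFun φ hφ
      map_add' := MopFun_add φ hφ
      map_smul' := MopFun_smul φ hφ }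
    (eLpNorm φ ∞ μc).toReal
    (fun f => MopFun_norm φ hφ f)

theorem Mop_coeFn (φ : 𝕋c → ℂ) (hφ : MemLp φ ∞ μc) (f : L2) :
    ⇑(Mop φ hφ f) =ᵐ[μc] fun x => φ x * f x :=
  MopFun_coeFn φ hφ f

/-- The conjugation operator `J : L²(𝕋) → L²(𝕋)`, `(Jf)(z) = f(z̄)`
(composition with `x ↦ -x` on the additive circle). -/
def Jop : L2 →L[ℂ] L2 :=
  LinearMap.mkContinuous
    { toFun := fun f =>
        Lp.compMeasurePreserving (fun x : 𝕋c => -x) (Measure.measurePreserving_neg μc) f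
      map_add' := by
        intro f g
        exact map_add (Lp.compMeasurePreserving _ (Measure.measurePreserving_neg μc)) f g
      map_smul' := by
        intro c f
        apply Lp.ext
        simp only [RingHom.id_apply]
        have hmp := Measure.measurePreserving_neg (μ := μc)
        have h1 := Lp.coeFn_compMeasurePreserving (μ := μc) (c • f) hmp
        have h2 := Lp.coeFn_compMeasurePreserving (μ := μc) f hmp
        have h3 : ⇑(c • f) ∘ (fun x : 𝕋c => -x) =ᵐ[μc] (c • ⇑f) ∘ (fun x : 𝕋c => -x) :=
          hmp.quasiMeasurePreserving.ae_eq_comp (Lp.coeFn_smul c f)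
        have h4 : (c • ⇑f) ∘ (fun x : 𝕋c => -x) = c • (⇑f ∘ fun x : 𝕋c => -x) := rfl
        have h5 : c • (⇑f ∘ fun x : 𝕋c => -x) =ᵐ[μc]
            c • ⇑(Lp.compMeasurePreserving (fun x : 𝕋c => -x) hmp f) :=
          h2.symm.const_smul c
        exact ((h1.trans h3).trans ((h4 ▸ h5 : _))).trans (Lp.coeFn_smul c _).symm }
    1
    (by
      intro f
      simp only [LinearMap.coe_mk, AddHom.coe_mk, one_mul]
      exact le_of_eq (Lp.norm_compMeasurePreserving f _))

/-- The Toeplitz operator `T_φ = P₊ M_φ |_{H²}` with symbol `φ ∈ L∞(𝕋)`. -/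
def Toep (φ : 𝕋c → ℂ) (hφ : MemLp φ ∞ μc) : Hardy →L[ℂ] Hardy :=
  (Submodule.orthogonalProjectionOnto Hardy).comp ((Mop φ hφ).comp Hardy.subtypeL)

/-- The Hankel operator `H_φ = P₊ M_φ J |_{H²}` with symbol `φ ∈ L∞(𝕋)`. -/
def Hank (φ : 𝕋c → ℂ) (hφ : MemLp φ ∞ μc) : Hardy →L[ℂ] Hardy :=
  (Submodule.orthogonalProjectionOnto Hardy).comp ((Mop φ hφ).comp (Jop.comp Hardy.subtypeL))

/-- The coordinate function `z` on the circle. -/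
def zFun : 𝕋c → ℂ := fun x => fourier 1 x

theorem zFun_memℒp : MemLp zFun ∞ μc := by
  refine memLp_top_of_bound ((fourier 1).continuous.aestronglyMeasurable) 1
    (Filter.Eventually.of_forall fun x => ?_)
  simp only [zFun, fourier_apply, Circle.norm_coe, le_refl]

/-- The unilateral shift `T_z`. -/
def Tz : Hardy →L[ℂ] Hardy := Toep zFun zFun_memℒp

/-- The bilateral shift `M_z` on `L²(𝕋)`. -/
def Mz : L2 →L[ℂ] L2 := Mop zFun zFun_memℒp

/-- `A` is a Toeplitz + Hankel operator. -/
def IsToepPlusHank (A : Hardy →L[ℂ] Hardy) : Prop :=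
  ∃ (φ ψ : 𝕋c → ℂ) (hφ : MemLp φ ∞ μc) (hψ : MemLp ψ ∞ μc), A = Toep φ hφ + Hank ψ hψ

/-- `φ` belongs to `H^∞`: it is essentially bounded and all its negative Fourier
coefficients vanish. -/
def IsHinf (φ : 𝕋c → ℂ) : Prop :=
  MemLp φ ∞ μc ∧ ∀ n : ℤ, n < 0 → fourierCoeff φ n = 0

/-- `θ` is an inner function: `θ ∈ H^∞` and `|θ| = 1` a.e. on the circle. -/
def IsInner (θ : 𝕋c → ℂ) : Prop :=
  IsHinf θ ∧ ∀ᵐ x ∂μc, ‖θ x‖ = 1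

theorem Mop_norm_of_inner {θ : 𝕋c → ℂ} (hθ : IsInner θ) (f : L2) :
    ‖Mop θ hθ.1.1 f‖ = ‖f‖ := by
  have h1 : ⇑(Mop θ hθ.1.1 f) =ᵐ[μc] θ • ⇑f := MopFun_coeFn θ hθ.1.1 f
  rw [Lp.norm_def, Lp.norm_def]
  congr 1
  rw [eLpNorm_congr_ae h1]
  apply eLpNorm_congr_norm_ae
  filter_upwards [hθ.2] with x hx
  simp [norm_smul, hx]

/-- The (Beurling-type) subspace `θ H²` of the Hardy space, for an inner function `θ`. -/
def thetaSub (θ : 𝕋c → ℂ) (hθ : IsInner θ) : Submodule ℂ Hardy where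
  carrier := {f | ∃ g : Hardy, (f : L2) = Mop θ hθ.1.1 (g : L2)}
  add_mem' := by
    rintro f f' ⟨g, hg⟩ ⟨g', hg'⟩
    exact ⟨g + g', by
      simp only [Submodule.coe_add, hg, hg']
      rw [← map_add]⟩
  zero_mem' := ⟨0, by simp⟩
  smul_mem' := by
    rintro c f ⟨g, hg⟩
    exact ⟨c • g, by
      rw [Submodule.coe_smul, hg, ← (Mop θ hθ.1.1).map_smul]
      rfl⟩

theorem isClosed_thetaSub (θ : 𝕋c → ℂ) (hθ : IsInner θ) :
    IsClosed ((thetaSub θ hθ) : Set Hardy) := by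
  have hiso : Isometry (fun g : Hardy => Mop θ hθ.1.1 (g : L2)) := by
    apply Isometry.of_dist_eq
    intro g g'
    rw [dist_eq_norm, dist_eq_norm, ← map_sub, ← Submodule.coe_sub, Mop_norm_of_inner hθ]
    rfl
  have hrange : IsClosed (Set.range fun g : Hardy => Mop θ hθ.1.1 (g : L2)) :=
    hiso.isClosedEmbedding.isClosed_range
  have hset : ((thetaSub θ hθ) : Set Hardy) =
      (Subtype.val) ⁻¹' (Set.range fun g : Hardy => Mop θ hθ.1.1 (g : L2)) := by
    ext f
    constructor
    · rintro ⟨g, hg⟩; exact ⟨g, hg.symm⟩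
    · rintro ⟨g, hg⟩; exact ⟨g, hg.symm⟩
  rw [hset]
  exact hrange.preimage continuous_subtype_val

/-- The model space `𝒦_θ = H² ⊖ θH²`. -/
def modelSpace (θ : 𝕋c → ℂ) (hθ : IsInner θ) : Submodule ℂ Hardy := (thetaSub θ hθ)ᗮ

/-- The orthogonal projection of `H²` onto `θH²`. -/
def Ptheta (θ : 𝕋c → ℂ) (hθ : IsInner θ) : Hardy →L[ℂ] Hardy :=
  haveI : CompleteSpace (thetaSub θ hθ) := (isClosed_thetaSub θ hθ).completeSpace_coe
  (thetaSub θ hθ).subtypeL.comp (Submodule.orthogonalProjectionOnto (thetaSub θ hθ))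

/-- The orthogonal projection of `H²` onto the model space `𝒦_θ`. -/
def Pmodel (θ : 𝕋c → ℂ) (hθ : IsInner θ) : Hardy →L[ℂ] Hardy :=
  haveI hc : CompleteSpace (thetaSub θ hθ) := (isClosed_thetaSub θ hθ).completeSpace_coe
  haveI h2 : Submodule.HasOrthogonalProjection (modelSpace θ hθ) :=
    (inferInstance : Submodule.HasOrthogonalProjection (thetaSub θ hθ)ᗮ)
  (modelSpace θ hθ).subtypeL.comp (Submodule.orthogonalProjectionOnto (modelSpace θ hθ))

/-- The monomial `z^k`, as an element of the Hardy space. -/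
def monoH (k : ℕ) : Hardy :=
  ⟨fourierLp 2 (k : ℤ), by
    intro n hn
    rw [← fourierBasis_repr]
    have hb : (fourierLp 2 (k : ℤ) : L2) = fourierBasis (k : ℤ) := by rw [coe_fourierBasis]
    rw [hb, fourierBasis.repr_self]
    exact lp.single_apply_ne 2 (k : ℤ) _ (by omega)⟩

/-- `T_z^*`, the adjoint of the unilateral shift. -/
def TzStar : Hardy →L[ℂ] Hardy := ContinuousLinearMap.adjoint Tz

/-- `M_z^*`, the adjoint of the bilateral shift. -/
def MzStar : L2 →L[ℂ] L2 := ContinuousLinearMap.adjoint Mz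

/-- The constant function `1` as an element of `L²(𝕋)`. -/
def oneL2 : L2 := (memLp_const (1 : ℂ)).toLp (fun _ => (1 : ℂ))

/-- The function `z̄ = conj z` on the circle. -/
def zbarFun : 𝕋c → ℂ := fun x => fourier (-1) x

theorem zbarFun_memℒp : MemLp zbarFun ∞ μc := by
  refine memLp_top_of_bound ((fourier (-1)).continuous.aestronglyMeasurable) 1
    (Filter.Eventually.of_forall fun x => ?_)
  simp only [zbarFun, fourier_apply, Circle.norm_coe, le_refl]

/-- The function `z̄` as an element of `L²(𝕋)`. -/
def zbarL2 : L2 := (zbarFun_memℒp.mono_exponent le_top).toLp zbarFun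

theorem zbarsq_memℒp {ψ : 𝕋c → ℂ} (hψ : MemLp ψ ∞ μc) :
    MemLp (fun x : 𝕋c => ((starRingEnd ℂ) (zFun x) ^ 2 - 1) * ψ x) ∞ μc := by
  have hc : Continuous fun x : 𝕋c => (starRingEnd ℂ) (zFun x) ^ 2 - 1 := by
    have h1 : Continuous (zFun) := (fourier 1).continuous
    exact ((h1.star.pow 2).sub continuous_const)
  have hb : MemLp (fun x : 𝕋c => (starRingEnd ℂ) (zFun x) ^ 2 - 1) ∞ μc := by
    refine memLp_top_of_bound hc.aestronglyMeasurable 2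
      (Filter.Eventually.of_forall fun x => ?_)
    calc ‖(starRingEnd ℂ) (zFun x) ^ 2 - 1‖ ≤ ‖(starRingEnd ℂ) (zFun x) ^ 2‖ + ‖(1 : ℂ)‖ :=
          norm_sub_le _ _
      _ ≤ 2 := by
          rw [norm_pow, RCLike.norm_conj]
          simp only [zFun, fourier_apply, Circle.norm_coe, norm_one]
          norm_num
  have h2 := hψ.smul (r := ∞) hb
  have h3 : ((fun x : 𝕋c => (starRingEnd ℂ) (zFun x) ^ 2 - 1) • ψ) =
      fun x : 𝕋c => ((starRingEnd ℂ) (zFun x) ^ 2 - 1) * ψ x := by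
    funext x
    simp only [Pi.smul_apply, smul_eq_mul, Pi.mul_apply]
  exact h3 ▸ h2

/-- `A` is `θ`-paired: `A = T_φ P_{θH²} + T_ψ P_{𝒦_θ}` for some `φ, ψ ∈ H^∞`. -/
def IsThetaPaired (θ : 𝕋c → ℂ) (hθ : IsInner θ) (X : Hardy →L[ℂ] Hardy) : Prop :=
  ∃ (φ ψ : 𝕋c → ℂ) (hφ : IsHinf φ) (hψ : IsHinf ψ),
    X = (Toep φ hφ.1).comp (Ptheta θ hθ) + (Toep ψ hψ.1).comp (Pmodel θ hθ)

/-!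
In the Fourier basis `(eₙ)` of `L²(𝕋)`, the entry `⟨Σ_{φ,ψ} eₙ, eₘ⟩` is `φ̂(m - n)` for `m ≥ 0`
and `ψ̂(m - n)` for `m < 0`, while the `(m, n)` entry of `P₊ M_z* X M_z + P₋ M_z X M_z*` is the
entry of `X` at `(m + 1, n + 1)` for `m ≥ 0` and at `(m - 1, n - 1)` for `m < 0`. So the identity
says exactly that the matrix of `X` is constant along diagonals on each of the half-planes
`m ≥ 0` and `m < 0`; this gives the forward direction and the uniqueness of `φ, ψ`.

For the converse, each of the two diagonal sequences agrees, on any finite window, with a far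
shifted window of the matrix of `X`, so its Laurent matrix `(c (m - k))` is bounded by `‖X‖`.
A bounded Laurent matrix comes from an `L∞` symbol `w ∈ L²`: the bound says `‖w g‖₂ ≤ C ‖g‖₂`
for trigonometric polynomials `g`, Fatou's lemma extends it to all `g ∈ L²`, and testing it on
indicators gives `|w| ≤ C` almost everywhere.
-/

open Filter Topology Submodule Set
open scoped NNReal

section MultiplierBound

variable {α 𝕜 : Type*} [MeasurableSpace α] {μ : Measure α} [NormedField 𝕜] {p : ℝ≥0∞}

theorem isClosed_setOf_eLpNorm_mul_le [Fact (1 ≤ p)] {w : α → 𝕜}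
    (hw : AEStronglyMeasurable w μ) (C : ℝ≥0) :
    IsClosed {g : Lp 𝕜 p μ | eLpNorm (w * ⇑g) p μ ≤ C * ‖g‖ₑ} := by
  refine IsSeqClosed.isClosed fun g g₀ hg hlim => ?_
  obtain ⟨ns, hns, hae⟩ := (tendstoInMeasure_of_tendsto_Lp hlim).exists_seq_tendsto_ae
  have hnorm : Tendsto (fun i => (C : ℝ≥0∞) * ‖g (ns i)‖ₑ) atTop (𝓝 (C * ‖g₀‖ₑ)) :=
    ENNReal.Tendsto.const_mul ((continuous_enorm.tendsto g₀).comp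
      (hlim.comp hns.tendsto_atTop)) (Or.inr ENNReal.coe_ne_top)
  calc eLpNorm (w * ⇑g₀) p μ
      ≤ atTop.liminf fun i => eLpNorm (w * ⇑(g (ns i))) p μ :=
        Lp.eLpNorm_lim_le_liminf_eLpNorm (fun i => hw.mul (Lp.aestronglyMeasurable _)) _
          (hae.mono fun x hx => hx.const_mul (w x))
    _ ≤ atTop.liminf fun i => (C : ℝ≥0∞) * ‖g (ns i)‖ₑ :=
        liminf_le_liminf (Eventually.of_forall fun i => hg (ns i))
    _ = C * ‖g₀‖ₑ := hnorm.liminf_eq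

theorem ae_nnnorm_le_of_forall_eLpNorm_mul_le [IsFiniteMeasure μ] [Fact (1 ≤ p)] (hp : p ≠ ∞)
    {w : α → 𝕜} (hw : StronglyMeasurable w) {C : ℝ≥0}
    (h : ∀ g : Lp 𝕜 p μ, eLpNorm (w * ⇑g) p μ ≤ C * ‖g‖ₑ) :
    ∀ᵐ x ∂μ, ‖w x‖₊ ≤ C := by
  have hp0 : p ≠ 0 := (zero_lt_one.trans_le (Fact.out : 1 ≤ p)).ne'
  refine (ae_le_const_iff_forall_gt_measure_zero _ _).mpr fun b hb => ?_
  set s := {x | b ≤ ‖w x‖₊}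
  have hs : MeasurableSet s := measurableSet_le measurable_const hw.nnnorm.measurable
  set g := indicatorConstLp p hs (measure_ne_top μ s) (1 : 𝕜)
  have hgcoe : ⇑g =ᵐ[μ] s.indicator fun _ => (1 : 𝕜) := indicatorConstLp_coeFn
  clear_value g
  have hmul : w * ⇑g =ᵐ[μ] s.indicator w := by
    filter_upwards [hgcoe] with x hx
    by_cases hxs : x ∈ s <;> simp [hx, hxs]
  have hg : ‖g‖ₑ = μ s ^ (1 / p.toReal) := by
    rw [Lp.enorm_def, eLpNorm_congr_ae hgcoe,
      eLpNorm_indicator_const hs hp0 hp, enorm_one, one_mul]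
  have hlow : (b : ℝ≥0∞) * μ s ^ (1 / p.toReal) ≤ eLpNorm (s.indicator w) p μ := by
    calc (b : ℝ≥0∞) * μ s ^ (1 / p.toReal)
        = eLpNorm (s.indicator fun _ => (b : ℝ)) p μ := by
          rw [eLpNorm_indicator_const hs hp0 hp, Real.enorm_of_nonneg b.coe_nonneg,
            ENNReal.ofReal_coe_nnreal]
      _ ≤ eLpNorm (s.indicator w) p μ := by
          refine eLpNorm_mono_nnnorm fun x => ?_
          by_cases hxs : x ∈ s
          · rw [Set.indicator_of_mem hxs, Set.indicator_of_mem hxs, NNReal.nnnorm_eq]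
            exact hxs
          · simp [hxs]
  have hle : (b : ℝ≥0∞) * μ s ^ (1 / p.toReal) ≤ C * μ s ^ (1 / p.toReal) := by
    calc _ ≤ eLpNorm (s.indicator w) p μ := hlow
      _ = eLpNorm (w * ⇑g) p μ := (eLpNorm_congr_ae hmul).symm
      _ ≤ C * ‖g‖ₑ := h g
      _ = C * μ s ^ (1 / p.toReal) := by rw [hg]
  have hzero : μ s ^ (1 / p.toReal) = 0 := by
    by_contra hne
    have := (ENNReal.mul_le_mul_iff_left hne
      (ENNReal.rpow_ne_top_of_nonneg (by positivity) (measure_ne_top μ s))).mp hle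
    exact (not_le.mpr hb) (by exact_mod_cast this)
  rw [ENNReal.rpow_eq_zero_iff] at hzero
  rcases hzero with ⟨hz, -⟩ | ⟨-, hneg⟩
  · exact hz
  · exact absurd hneg (not_lt.mpr (by positivity))

end MultiplierBound

section Laurent

variable {T : ℝ} [Fact (0 < T)]

/-- `(e (m - k))` is the matrix of multiplication by the function with Fourier coefficients `e`. -/
def IsLaurentBounded (e : ℤ → ℂ) (C : ℝ≥0) : Prop :=
  ∀ (γ : ℤ →₀ ℂ) (S : Finset ℤ),
    ∑ m ∈ S, ‖∑ k ∈ γ.support, γ k * e (m - k)‖ ^ 2 ≤ C ^ 2 * ∑ k ∈ γ.support, ‖γ k‖ ^ 2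

theorem IsLaurentBounded.memℓp {e : ℤ → ℂ} {C : ℝ≥0} (h : IsLaurentBounded e C) :
    Memℓp e 2 := by
  refine memℓp_gen' (C := C ^ 2) fun S => ?_
  simpa [Finsupp.support_single] using h (Finsupp.single 0 1) S

theorem fourierCoeff_fourier_mul (f : AddCircle T → ℂ) (k m : ℤ) :
    fourierCoeff (fun x => fourier k x * f x) m = fourierCoeff f (m - k) := by
  simp only [fourierCoeff, smul_eq_mul, ← mul_assoc, ← fourier_add]
  congr! 4
  congr 1
  ring

theorem ae_eq_of_fourierCoeff_eq {f g : AddCircle T → ℂ} (hf : MemLp f 2 haarAddCircle)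
    (hg : MemLp g 2 haarAddCircle) (h : fourierCoeff f = fourierCoeff g) :
    f =ᵐ[haarAddCircle] g := by
  have : hf.toLp f = hg.toLp g := fourierBasis.repr.injective <| lp.ext <| funext fun n => by
    rw [fourierBasis_repr, fourierBasis_repr, fourierCoeff_congr_ae hf.coeFn_toLp,
      fourierCoeff_congr_ae hg.coeFn_toLp, h]
  exact hf.coeFn_toLp.symm.trans ((congrArg (⇑) this).eventuallyEq.trans hg.coeFn_toLp)

theorem eLpNorm_le_of_sum_sq_fourierCoeff_le {f : AddCircle T → ℂ}
    (hf : MemLp f 2 haarAddCircle) {B : ℝ≥0}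
    (h : ∀ S : Finset ℤ, ∑ m ∈ S, ‖fourierCoeff f m‖ ^ 2 ≤ B ^ 2) :
    eLpNorm f 2 haarAddCircle ≤ B := by
  have hnorm : ‖fourierBasis.repr (hf.toLp f)‖ ≤ B := by
    refine lp.norm_le_of_forall_sum_le (by norm_num) B.coe_nonneg fun S => ?_
    simp only [ENNReal.toReal_ofNat, Real.rpow_two, fourierBasis_repr,
      fourierCoeff_congr_ae hf.coeFn_toLp]
    exact h S
  rw [LinearIsometryEquiv.norm_map] at hnorm
  rw [← Lp.enorm_toLp hf, enorm_eq_nnnorm, ENNReal.coe_le_coe]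
  exact_mod_cast hnorm

theorem eLpNorm_mul_le_of_mem_span_fourierLp (F : Lp ℂ 2 (haarAddCircle (T := T))) {C : ℝ≥0}
    (h : IsLaurentBounded (fourierCoeff F) C) {q : Lp ℂ 2 (haarAddCircle (T := T))}
    (hq : q ∈ span ℂ (range (fourierLp 2))) :
    eLpNorm (⇑F * ⇑q) 2 haarAddCircle ≤ C * ‖q‖ₑ := by
  obtain ⟨γ, hγ⟩ := Finsupp.mem_span_range_iff_exists_finsupp.mp hq
  set g : C(AddCircle T, ℂ) := γ.sum fun k a => a • fourier k
  have hqg : q = ContinuousMap.toLp 2 haarAddCircle ℂ g := by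
    simp [← hγ, g, map_finsuppSum]
  have hrepr (k : ℤ) : fourierBasis.repr q k = γ k := by
    rw [fourierBasis.repr_apply_apply, ← hγ, ← coe_fourierBasis,
      ← Finsupp.linearCombination_apply, fourierBasis.orthonormal.inner_right_finsupp]
  have hbessel : ∑ k ∈ γ.support, ‖γ k‖ ^ 2 ≤ ‖q‖ ^ 2 := by
    simpa only [← fourierBasis.repr_apply_apply, hrepr] using
      fourierBasis.orthonormal.sum_inner_products_le (s := γ.support) q
  have hcoeff (m : ℤ) :
      fourierCoeff (⇑F * ⇑g) m = ∑ k ∈ γ.support, γ k * fourierCoeff F (m - k) := by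
    have hsum : ⇑F * ⇑g = ∑ k ∈ γ.support, fun x => γ k * (fourier (T := T) k x * F x) := by
      ext x
      simp only [Pi.mul_apply, g, Finsupp.sum, ContinuousMap.coe_sum, ContinuousMap.coe_smul,
        Finset.sum_apply, Pi.smul_apply, smul_eq_mul, Finset.mul_sum]
      exact Finset.sum_congr rfl fun k _ => by ring
    rw [hsum, fourierCoeff.sum]
    · simp only [Finset.sum_apply, fourierCoeff.const_mul, fourierCoeff_fourier_mul]
    · exact fun k _ => (((Lp.memLp F).integrable one_le_two).fourier_smul k).const_mul (γ k)
  have hmem : MemLp (⇑F * ⇑g) 2 haarAddCircle :=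
    (g.memLp (p := ∞) haarAddCircle ℂ).mul (Lp.memLp F)
  calc eLpNorm (⇑F * ⇑q) 2 haarAddCircle = eLpNorm (⇑F * ⇑g) 2 haarAddCircle :=
        eLpNorm_congr_ae ((EventuallyEq.refl _ _).mul (hqg ▸ ContinuousMap.coeFn_toLp _ g))
    _ ≤ ↑(C * ‖q‖₊) := eLpNorm_le_of_sum_sq_fourierCoeff_le hmem fun S => by
        calc ∑ m ∈ S, ‖fourierCoeff (⇑F * ⇑g) m‖ ^ 2
            = ∑ m ∈ S, ‖∑ k ∈ γ.support, γ k * fourierCoeff F (m - k)‖ ^ 2 := by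
              simp only [hcoeff]
          _ ≤ C ^ 2 * ∑ k ∈ γ.support, ‖γ k‖ ^ 2 := h γ S
          _ ≤ C ^ 2 * ‖q‖ ^ 2 := by gcongr
          _ = ((C * ‖q‖₊ : ℝ≥0) : ℝ) ^ 2 := by push_cast; ring
    _ = C * ‖q‖ₑ := by rw [ENNReal.coe_mul, enorm_eq_nnnorm]

theorem IsLaurentBounded.exists_memLp_top_fourierCoeff_eq {e : ℤ → ℂ} {C : ℝ≥0}
    (h : IsLaurentBounded e C) :
    ∃ φ : AddCircle T → ℂ, MemLp φ ∞ haarAddCircle ∧ fourierCoeff φ = e := by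
  set F : Lp ℂ 2 (haarAddCircle (T := T)) := fourierBasis.repr.symm ⟨e, h.memℓp⟩
  have hF : fourierCoeff F = e := funext fun n => by
    rw [← fourierBasis_repr, LinearIsometryEquiv.apply_symm_apply]
  have hdense := span_fourierLp_closure_eq_top (T := T) (p := 2) ENNReal.ofNat_ne_top
  rw [← dense_iff_topologicalClosure_eq_top] at hdense
  have hbound : ∀ g : Lp ℂ 2 haarAddCircle, eLpNorm (⇑F * ⇑g) 2 haarAddCircle ≤ C * ‖g‖ₑ := by
    have := (isClosed_setOf_eLpNorm_mul_le (Lp.aestronglyMeasurable F) C).closure_subset_iff.mpr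
      fun q hq => eLpNorm_mul_le_of_mem_span_fourierLp F (hF ▸ h) hq
    rw [hdense.closure_eq] at this
    exact fun g => this (mem_univ g)
  refine ⟨F, memLp_top_of_bound (Lp.aestronglyMeasurable F) C ?_, hF⟩
  filter_upwards [ae_nnnorm_le_of_forall_eLpNorm_mul_le (by norm_num) (Lp.stronglyMeasurable F)
    hbound] with x hx
  exact_mod_cast hx

end Laurent

local notation "𝐞" => (fourierBasis : HilbertBasis ℤ ℂ L2)

def fourierMatrix (A : L2 →L[ℂ] L2) (m n : ℤ) : ℂ := 𝐞.repr (A (𝐞 n)) m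

theorem ext_fourierMatrix {A B : L2 →L[ℂ] L2} (h : fourierMatrix A = fourierMatrix B) :
    A = B := by
  refine ContinuousLinearMap.ext_on (dense_iff_topologicalClosure_eq_top.mpr 𝐞.dense_span) ?_
  rintro _ ⟨n, rfl⟩
  exact 𝐞.repr.injective (lp.ext (funext fun m => congrFun (congrFun h m) n))

theorem repr_fourierBasis (n m : ℤ) : 𝐞.repr (𝐞 n) m = if m = n then 1 else 0 := by
  classical
  rw [𝐞.repr_self, lp.single_apply, Pi.single_apply]

theorem fourierBasis_mem_Hardy {n : ℤ} (hn : 0 ≤ n) : 𝐞 n ∈ Hardy := fun k hk => by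
  rw [← fourierBasis_repr, repr_fourierBasis, if_neg (by omega)]

theorem repr_Pplus (f : L2) (m : ℤ) :
    𝐞.repr (Pplus f) m = if 0 ≤ m then 𝐞.repr f m else 0 := by
  split_ifs with hm
  · rw [𝐞.repr_apply_apply, 𝐞.repr_apply_apply, show Pplus f = Hardy.starProjection f from rfl,
      ← inner_starProjection_left_eq_right,
      starProjection_eq_self_iff.mpr (fourierBasis_mem_Hardy hm)]
  · rw [fourierBasis_repr]
    exact (orthogonalProjectionOnto Hardy f).2 m (by omega)

theorem repr_Pminus (f : L2) (m : ℤ) :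
    𝐞.repr (Pminus f) m = if 0 ≤ m then 0 else 𝐞.repr f m := by
  rw [show Pminus f = f - Pplus f from rfl, map_sub, lp.coeFn_sub, Pi.sub_apply, repr_Pplus]
  split_ifs <;> simp

theorem repr_Mop_fourierBasis (φ : 𝕋c → ℂ) (hφ : MemLp φ ∞ μc) (n m : ℤ) :
    𝐞.repr (Mop φ hφ (𝐞 n)) m = fourierCoeff φ (m - n) := by
  rw [fourierBasis_repr, fourierCoeff_congr_ae (Mop_coeFn φ hφ _), ← fourierCoeff_fourier_mul]
  refine congrFun (fourierCoeff_congr_ae ?_) m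
  filter_upwards [coeFn_fourierLp 2 n] with x hx
  rw [coe_fourierBasis, hx, mul_comm]

theorem repr_Mz (f : L2) (m : ℤ) : 𝐞.repr (Mz f) m = 𝐞.repr f (m - 1) := by
  rw [fourierBasis_repr, fourierBasis_repr]
  exact (congrFun (fourierCoeff_congr_ae (Mop_coeFn zFun zFun_memℒp f)) m).trans
    (fourierCoeff_fourier_mul _ 1 m)

theorem Mz_fourierBasis (n : ℤ) : Mz (𝐞 n) = 𝐞 (n + 1) :=
  𝐞.repr.injective <| lp.ext <| funext fun m => by
    simp only [repr_Mz, repr_fourierBasis, sub_eq_iff_eq_add]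

theorem repr_MzStar (f : L2) (m : ℤ) : 𝐞.repr (MzStar f) m = 𝐞.repr f (m + 1) := by
  rw [𝐞.repr_apply_apply, 𝐞.repr_apply_apply, MzStar, ContinuousLinearMap.adjoint_inner_right,
    Mz_fourierBasis]

theorem MzStar_fourierBasis (n : ℤ) : MzStar (𝐞 n) = 𝐞 (n - 1) :=
  𝐞.repr.injective <| lp.ext <| funext fun m => by
    simp only [repr_MzStar, repr_fourierBasis, ← eq_sub_iff_add_eq]

theorem fourierMatrix_transposedPaired (φ ψ : 𝕋c → ℂ) (hφ : MemLp φ ∞ μc) (hψ : MemLp ψ ∞ μc)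
    (m n : ℤ) :
    fourierMatrix (Pplus.comp (Mop φ hφ) + Pminus.comp (Mop ψ hψ)) m n =
      if 0 ≤ m then fourierCoeff φ (m - n) else fourierCoeff ψ (m - n) := by
  simp only [fourierMatrix, _root_.add_apply, ContinuousLinearMap.comp_apply,
    map_add, lp.coeFn_add, Pi.add_apply, repr_Pplus, repr_Pminus, repr_Mop_fourierBasis]
  split_ifs <;> simp

theorem fourierMatrix_shiftConjugate (X : L2 →L[ℂ] L2) (m n : ℤ) :
    fourierMatrix (Pplus.comp (MzStar.comp (X.comp Mz)) + Pminus.comp (Mz.comp (X.comp MzStar)))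
      m n = if 0 ≤ m then fourierMatrix X (m + 1) (n + 1) else fourierMatrix X (m - 1) (n - 1) := by
  simp only [fourierMatrix, _root_.add_apply, ContinuousLinearMap.comp_apply,
    map_add, lp.coeFn_add, Pi.add_apply, repr_Pplus, repr_Pminus, repr_Mz, repr_MzStar,
    Mz_fourierBasis, MzStar_fourierBasis]
  split_ifs <;> simp

theorem apply_eq_apply_zero_of_shift_invariant {β : Type*} (a : ℤ → ℤ → β)
    (h : ∀ m n, 0 ≤ m → a m n = a (m + 1) (n + 1)) {m : ℤ} (hm : 0 ≤ m) (n : ℤ) :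
    a m n = a 0 (n - m) := by
  lift m to ℕ using hm
  induction m generalizing n with
  | zero => simp
  | succ k ih =>
    rw [← sub_add_cancel n 1, Nat.cast_succ, ← h k (n - 1) k.cast_nonneg, ih]
    ring_nf

theorem isLaurentBounded_of_eventually_fourierMatrix_eq (X : L2 →L[ℂ] L2) {l : Filter ℤ}
    [l.NeBot] {e : ℤ → ℂ} (he : ∀ m k, ∀ᶠ t in l, fourierMatrix X (m + t) (k + t) = e (m - k)) :
    IsLaurentBounded e ‖X‖₊ := by
  intro γ S
  -- for `t` far out along `l`, the Laurent window `S × γ.support` sits inside `X`'s matrix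
  obtain ⟨t, ht⟩ :=
    (S.eventually_all.2 fun m _ => γ.support.eventually_all.2 fun k _ => he m k).exists
  set u : L2 := ∑ k ∈ γ.support, γ k • 𝐞 (k + t)
  have hon : Orthonormal ℂ fun k => 𝐞 (k + t) :=
    𝐞.orthonormal.comp _ (add_left_injective t)
  have hu : ‖u‖ ^ 2 = ∑ k ∈ γ.support, ‖γ k‖ ^ 2 := by
    rw [← inner_self_eq_norm_sq (𝕜 := ℂ), hon.inner_sum, map_sum]
    refine Finset.sum_congr rfl fun k _ => ?_
    rw [RCLike.conj_mul, ← RCLike.ofReal_pow, RCLike.ofReal_re]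
  have hXu : ∀ m ∈ S, 𝐞.repr (X u) (m + t) = ∑ k ∈ γ.support, γ k * e (m - k) := by
    intro m hm
    simp only [u, map_sum, map_smul, lp.coeFn_sum, Finset.sum_apply, lp.coeFn_smul,
      Pi.smul_apply, smul_eq_mul]
    exact Finset.sum_congr rfl fun k hk => by rw [← ht m hm k hk, fourierMatrix]
  calc ∑ m ∈ S, ‖∑ k ∈ γ.support, γ k * e (m - k)‖ ^ 2
      = ∑ m ∈ S.map (addRightEmbedding t), ‖⟪𝐞 m, X u⟫_ℂ‖ ^ 2 := by
        rw [Finset.sum_map]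
        exact Finset.sum_congr rfl fun m hm => by rw [← hXu m hm, 𝐞.repr_apply_apply]; rfl
    _ ≤ ‖X u‖ ^ 2 := 𝐞.orthonormal.sum_inner_products_le (X u)
    _ ≤ (‖X‖ * ‖u‖) ^ 2 := by gcongr; exact X.le_opNorm u
    _ = ‖X‖₊ ^ 2 * ∑ k ∈ γ.support, ‖γ k‖ ^ 2 := by rw [mul_pow, hu, coe_nnnorm]

theorem exists_transposedPaired_eq (X : L2 →L[ℂ] L2)
    (hX : X = Pplus.comp (MzStar.comp (X.comp Mz)) + Pminus.comp (Mz.comp (X.comp MzStar))) :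
    ∃ (φ ψ : 𝕋c → ℂ) (hφ : MemLp φ ∞ μc) (hψ : MemLp ψ ∞ μc),
      X = Pplus.comp (Mop φ hφ) + Pminus.comp (Mop ψ hψ) := by
  set a := fourierMatrix X
  have hrec (m n : ℤ) : a m n = if 0 ≤ m then a (m + 1) (n + 1) else a (m - 1) (n - 1) := by
    rw [← fourierMatrix_shiftConjugate, ← hX]
  have hpos (m n : ℤ) (hm : 0 ≤ m) : a m n = a 0 (n - m) :=
    apply_eq_apply_zero_of_shift_invariant a (fun m n hm => by rw [hrec, if_pos hm]) hm n
  -- the reflection `(m, n) ↦ (-1 - m, -1 - n)` exchanges the two half-planes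
  have hneg (m n : ℤ) (hm : m < 0) : a m n = a (-1) (n - m - 1) := by
    have := apply_eq_apply_zero_of_shift_invariant (fun m n => a (-1 - m) (-1 - n))
      (fun m n hm => by rw [hrec, if_neg (by omega)]; ring_nf) (m := -1 - m) (by omega) (-1 - n)
    simp only [sub_sub_cancel] at this
    rw [this]
    ring_nf
  obtain ⟨φ, hφ, hφa⟩ : ∃ φ : 𝕋c → ℂ, MemLp φ ∞ μc ∧ fourierCoeff φ = fun k => a 0 (-k) :=
    IsLaurentBounded.exists_memLp_top_fourierCoeff_eq <|
      isLaurentBounded_of_eventually_fourierMatrix_eq X (l := atTop) fun m k =>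
        (eventually_ge_atTop (-m)).mono fun t ht => by
          change a (m + t) (k + t) = _
          rw [hpos _ _ (by omega)]
          ring_nf
  obtain ⟨ψ, hψ, hψa⟩ : ∃ ψ : 𝕋c → ℂ, MemLp ψ ∞ μc ∧ fourierCoeff ψ = fun k => a (-1) (-1 - k) :=
    IsLaurentBounded.exists_memLp_top_fourierCoeff_eq <|
      isLaurentBounded_of_eventually_fourierMatrix_eq X (l := atBot) fun m k =>
        (eventually_lt_atBot (-m)).mono fun t ht => by
          change a (m + t) (k + t) = _
          rw [hneg _ _ (by omega)]
          ring_nf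
  refine ⟨φ, ψ, hφ, hψ, ext_fourierMatrix (funext₂ fun m n => ?_)⟩
  rw [fourierMatrix_transposedPaired, hφa, hψa]
  split_ifs with hm
  · exact (hpos m n hm).trans (by ring_nf)
  · exact (hneg m n (by omega)).trans (by ring_nf)

theorem eq_shiftConjugate_of_eq_transposedPaired {φ ψ : 𝕋c → ℂ} (hφ : MemLp φ ∞ μc)
    (hψ : MemLp ψ ∞ μc) {X : L2 →L[ℂ] L2} (hX : X = Pplus.comp (Mop φ hφ) + Pminus.comp (Mop ψ hψ)) :
    X = Pplus.comp (MzStar.comp (X.comp Mz)) + Pminus.comp (Mz.comp (X.comp MzStar)) := by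
  refine ext_fourierMatrix (funext₂ fun m n => ?_)
  rw [fourierMatrix_shiftConjugate, hX]
  simp only [fourierMatrix_transposedPaired]
  split_ifs <;> first | omega | ring_nf

theorem ae_eq_of_transposedPaired_eq {φ ψ φ₁ ψ₁ : 𝕋c → ℂ} (hφ : MemLp φ ∞ μc)
    (hψ : MemLp ψ ∞ μc) (hφ₁ : MemLp φ₁ ∞ μc) (hψ₁ : MemLp ψ₁ ∞ μc)
    (h : Pplus.comp (Mop φ hφ) + Pminus.comp (Mop ψ hψ) =
      Pplus.comp (Mop φ₁ hφ₁) + Pminus.comp (Mop ψ₁ hψ₁)) :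
    φ =ᵐ[μc] φ₁ ∧ ψ =ᵐ[μc] ψ₁ := by
  have hentry (m n : ℤ) := congrFun (congrFun (congrArg fourierMatrix h) m) n
  simp only [fourierMatrix_transposedPaired] at hentry
  refine ⟨ae_eq_of_fourierCoeff_eq (hφ.mono_exponent le_top) (hφ₁.mono_exponent le_top)
      (funext fun k => ?_),
    ae_eq_of_fourierCoeff_eq (hψ.mono_exponent le_top) (hψ₁.mono_exponent le_top)
      (funext fun k => ?_)⟩
  · simpa using hentry 0 (-k)
  · simpa using hentry (-1) (-1 - k)

/-- **Theorem.** `X ∈ B(L²(𝕋))` is a transposed paired operator `Σ_{φ,ψ} = P₊ M_φ + P₋ M_ψ`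
if and only if `X = P₊ M_z* X M_z + P₋ M_z X M_z*`; moreover the representing functions are
unique (as elements of `L∞(𝕋)`, i.e. up to a.e. equality). -/
theorem transposed_paired_operator_iff (X : L2 →L[ℂ] L2) :
    ((∃ (φ ψ : 𝕋c → ℂ) (hφ : MemLp φ ∞ μc) (hψ : MemLp ψ ∞ μc),
        X = Pplus.comp (Mop φ hφ) + Pminus.comp (Mop ψ hψ)) ↔
      X = Pplus.comp (MzStar.comp (X.comp Mz)) + Pminus.comp (Mz.comp (X.comp MzStar))) ∧
    ∀ (φ ψ φ₁ ψ₁ : 𝕋c → ℂ) (hφ : MemLp φ ∞ μc) (hψ : MemLp ψ ∞ μc)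
        (hφ₁ : MemLp φ₁ ∞ μc) (hψ₁ : MemLp ψ₁ ∞ μc),
      Pplus.comp (Mop φ hφ) + Pminus.comp (Mop ψ hψ) =
          Pplus.comp (Mop φ₁ hφ₁) + Pminus.comp (Mop ψ₁ hψ₁) →
      φ =ᵐ[μc] φ₁ ∧ ψ =ᵐ[μc] ψ₁ :=
  ⟨⟨fun ⟨_, _, hφ, hψ, hX⟩ => eq_shiftConjugate_of_eq_transposedPaired hφ hψ hX,
      exists_transposedPaired_eq X⟩,
    fun _ _ _ _ => ae_eq_of_transposedPaired_eq⟩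

end PaperTH
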